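/- Let φ : ℝ → ℝ be L_φ-Lipschitz with φ(0) = c, and let f : ℝ^{p×d} → ℝ^p satisfy Σ_{m=1}^p |f(W)_m| ≤ B for all W in a parameter class C. Let RS(C) denote the set of all row vectors of matrices in C, enlarged to contain 0. Then for fixed points z₁,…,z_N ∈ ℝ^d, E_ε[ sup_{W∈C} (1/N) Σᵢ εᵢ ⟨f(W), φ(W zᵢ)⟩ ] ≤ (2 B L_φ / N) E_ε[ sup_{w̄∈RS(C)} Σᵢ εᵢ ⟨w̄, zᵢ⟩ ] + B|c|/√N, where φ(Wz) denotes coordinatewise application of φ to the vector Wz and ε are i.i.d. Rademacher variables. -/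

import Mathlib

open Finset

/-- Expectation over i.i.d. Rademacher signs `ε : Fin n → {−1,1}`. -/
noncomputable def expSign (n : ℕ) (F : (Fin n → ℝ) → ℝ) : ℝ :=
  (∑ b : Fin n → Bool, F (fun i => if b i then 1 else -1)) / 2 ^ n

/-!
Write `Xₛ(w) = ∑ᵢ sᵢ φ(⟨w, zᵢ⟩)`. Since `⟨f(W), φ(W zᵢ)⟩ = ∑ₘ f(W)ₘ φ(⟨Wₘ, zᵢ⟩)`, exchanging the
sums bounds the supremum over `C` by `(B / N) · sup_{w ∈ RS} |Xₛ(w)|`. Because `0 ∈ RS` and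
`Xₛ(0) = c ∑ᵢ sᵢ`, that supremum is at most `sup Xₛ + sup X₋ₛ + |c| |∑ᵢ sᵢ|`; the two suprema have
the same expectation, and `E |∑ᵢ εᵢ| ≤ √N` by Cauchy–Schwarz. Finally the Ledoux–Talagrand
contraction principle, proved by pairing each sign vector with its flip at one coordinate and
replacing `φ(⟨w, zᵢ⟩)` by `L_φ ⟨w, zᵢ⟩` one coordinate at a time, bounds `E sup Xₛ`.
-/

open Set NNReal

section expSign

variable {n : ℕ}

lemma abs_ite_one_neg_one (b : Bool) : |(if b then 1 else -1 : ℝ)| = 1 := by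
  cases b <;> simp

lemma expSign_mono {F G : (Fin n → ℝ) → ℝ} (h : ∀ s, (∀ i, |s i| = 1) → F s ≤ G s) :
    expSign n F ≤ expSign n G := by
  unfold expSign
  gcongr with b
  exact h _ fun i => abs_ite_one_neg_one (b i)

lemma expSign_congr {F G : (Fin n → ℝ) → ℝ} (h : ∀ s, (∀ i, |s i| = 1) → F s = G s) :
    expSign n F = expSign n G :=
  le_antisymm (expSign_mono fun s hs => (h s hs).le) (expSign_mono fun s hs => (h s hs).ge)

lemma expSign_const (a : ℝ) : expSign n (fun _ => a) = a := by
  simp [expSign]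

lemma expSign_add (F G : (Fin n → ℝ) → ℝ) :
    expSign n (fun s => F s + G s) = expSign n F + expSign n G := by
  simp [expSign, sum_add_distrib, add_div]

lemma expSign_sum {ι : Type*} (t : Finset ι) (F : ι → (Fin n → ℝ) → ℝ) :
    expSign n (fun s => ∑ j ∈ t, F j s) = ∑ j ∈ t, expSign n (F j) := by
  simp only [expSign, sum_div]
  exact sum_comm

lemma expSign_const_mul (a : ℝ) (F : (Fin n → ℝ) → ℝ) :
    expSign n (fun s => a * F s) = a * expSign n F := by
  simp [expSign, ← mul_sum, mul_div_assoc]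

lemma expSign_comp_neg_ite (P : Fin n → Prop) [DecidablePred P] (F : (Fin n → ℝ) → ℝ) :
    expSign n (fun s => F (fun i => if P i then -s i else s i)) = expSign n F := by
  have hflip : Function.Involutive fun (b : Fin n → Bool) i => xor (decide (P i)) (b i) :=
    fun b => funext fun i => by simp
  unfold expSign
  congr 1
  refine Fintype.sum_bijective _ hflip.bijective _ _ fun b => congrArg F (funext fun i => ?_)
  by_cases hP : P i <;> cases hb : b i <;> simp [hP, hb]

lemma expSign_le_of_add_comp_flip_le (k : Fin n) {F G : (Fin n → ℝ) → ℝ}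
    (h : ∀ s, (∀ i, |s i| = 1) →
      F s + F (fun i => if i = k then -s i else s i)
        ≤ G s + G (fun i => if i = k then -s i else s i)) :
    expSign n F ≤ expSign n G := by
  have hF := expSign_add F fun s => F (fun i => if i = k then -s i else s i)
  have hG := expSign_add G fun s => G (fun i => if i = k then -s i else s i)
  rw [expSign_comp_neg_ite] at hF hG
  linarith [expSign_mono h]

lemma expSign_mul_apply (i j : Fin n) :
    expSign n (fun s => s i * s j) = if i = j then 1 else 0 := by
  split_ifs with hij
  · subst hij
    rw [expSign_congr (G := fun _ => 1) fun s hs => by rw [← abs_mul_abs_self, hs i, one_mul]]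
    exact expSign_const 1
  · have h := expSign_comp_neg_ite (· = j) fun s => s i * s j
    simp only [hij, if_false, if_true, mul_neg] at h
    have hneg := expSign_const_mul (-1) fun s => s i * s j
    simp only [neg_one_mul] at hneg
    linarith

lemma expSign_sum_sq : expSign n (fun s => (∑ i, s i) ^ 2) = n := by
  simp_rw [sq, sum_mul_sum, expSign_sum, expSign_mul_apply]
  simp

lemma expSign_abs_le_sqrt (F : (Fin n → ℝ) → ℝ) :
    expSign n (fun s => |F s|) ≤ √(expSign n fun s => F s ^ 2) := by
  have hcard : ((univ : Finset (Fin n → Bool)).card : ℝ) = 2 ^ n := by simp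
  refine Real.le_sqrt_of_sq_le ?_
  have := sum_div_card_sq_le_sum_sq_div_card (s := (univ : Finset (Fin n → Bool)))
    (f := fun b => |F fun i => if b i then 1 else -1|)
  simpa [expSign, hcard] using this

lemma expSign_abs_sum_le_sqrt : expSign n (fun s => |∑ i, s i|) ≤ √n :=
  (expSign_abs_le_sqrt _).trans_eq (by rw [expSign_sum_sq])

end expSign

lemma sum_mul_le_sum_abs_mul {ι : Type*} (t : Finset ι) {a b : ι → ℝ} {K : ℝ}
    (hb : ∀ j ∈ t, |b j| ≤ K) :
    ∑ j ∈ t, a j * b j ≤ (∑ j ∈ t, |a j|) * K := by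
  rw [sum_mul]
  refine sum_le_sum fun j hj => (le_abs_self _).trans ?_
  rw [abs_mul]
  exact mul_le_mul_of_nonneg_left (hb j hj) (abs_nonneg _)

section Bounds

variable {α ι : Type*} [Fintype ι]

lemma bddAbove_range_abs_sum_mul {u : α → ι → ℝ} (hu : ∀ i, ∃ M, ∀ a, |u a i| ≤ M)
    (s : ι → ℝ) : BddAbove (range fun a => |∑ i, s i * u a i|) := by
  choose M hM using hu
  refine ⟨∑ i, |s i| * M i, ?_⟩
  rintro _ ⟨a, rfl⟩
  refine (abs_sum_le_sum_abs _ _).trans (sum_le_sum fun i _ => ?_)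
  rw [abs_mul]
  exact mul_le_mul_of_nonneg_left (hM i a) (abs_nonneg _)

lemma bddAbove_range_sum_mul {u : α → ι → ℝ} (hu : ∀ i, ∃ M, ∀ a, |u a i| ≤ M) (s : ι → ℝ) :
    BddAbove (range fun a => ∑ i, s i * u a i) :=
  (bddAbove_range_abs_sum_mul hu s).range_mono _ fun _ => le_abs_self _

lemma exists_abs_le_of_bddAbove_range_sum_mul [DecidableEq ι] {u : α → ι → ℝ}
    (hu : ∀ s : ι → ℝ, BddAbove (range fun a => ∑ i, s i * u a i)) (i : ι) :
    ∃ M, ∀ a, |u a i| ≤ M := by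
  obtain ⟨M₁, hM₁⟩ := hu (Pi.single i 1)
  obtain ⟨M₂, hM₂⟩ := hu (Pi.single i (-1))
  refine ⟨max M₁ M₂, fun a => abs_le.2 ⟨?_, ?_⟩⟩
  · have := hM₂ ⟨a, rfl⟩
    simp [Pi.single_apply] at this
    linarith [le_max_right M₁ M₂]
  · have := hM₁ ⟨a, rfl⟩
    simp [Pi.single_apply] at this
    linarith [le_max_left M₁ M₂]

lemma LipschitzWith.exists_abs_comp_le {f : ℝ → ℝ} {K : ℝ≥0} (hf : LipschitzWith K f)
    {x : α → ℝ} (hx : ∃ M, ∀ a, |x a| ≤ M) : ∃ M, ∀ a, |f (x a)| ≤ M := by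
  obtain ⟨M, hM⟩ := hx
  refine ⟨|f 0| + K * M, fun a => ?_⟩
  have hfa := hf.dist_le_mul (x a) 0
  rw [Real.dist_eq, Real.dist_eq, sub_zero] at hfa
  have := abs_sub_abs_le_abs_sub (f (x a)) (f 0)
  nlinarith [hM a, K.2]

end Bounds

section Suprema

variable {α : Type*}

lemma abs_le_ciSup_add_ciSup_neg_add_abs {X : α → ℝ} (h : BddAbove (range X))
    (h' : BddAbove (range fun a => -X a)) (a a₀ : α) :
    |X a| ≤ (⨆ b, X b) + (⨆ b, -X b) + |X a₀| := by
  have := le_ciSup h a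
  have := le_ciSup h a₀
  have := le_ciSup h' a
  have := le_ciSup h' a₀
  rw [abs_le]
  constructor <;> linarith [le_abs_self (X a₀), neg_abs_le (X a₀)]

/-- The two-point step of the Ledoux–Talagrand contraction principle. -/
lemma ciSup_add_ciSup_le_of_abs_sub_le [Nonempty α] {A h g : α → ℝ}
    (hhg : ∀ a a', |h a - h a'| ≤ |g a - g a'|)
    (hg : BddAbove (range fun a => A a + g a)) (hg' : BddAbove (range fun a => A a - g a)) :
    (⨆ a, A a + h a) + (⨆ a, A a - h a) ≤ (⨆ a, A a + g a) + (⨆ a, A a - g a) := by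
  set R := (⨆ a, A a + g a) + (⨆ a, A a - g a)
  have key : ∀ a a', (A a + h a) + (A a' - h a') ≤ R := fun a a' => by
    have := (abs_le.1 (hhg a a')).2
    rcases abs_cases (g a - g a') with ⟨he, -⟩ | ⟨he, -⟩ <;>
      linarith [le_ciSup hg a, le_ciSup hg a', le_ciSup hg' a, le_ciSup hg' a']
  have inner : ∀ a, (⨆ a', A a' - h a') ≤ R - (A a + h a) :=
    fun a => ciSup_le fun a' => by linarith [key a a']
  have outer : (⨆ a, A a + h a) ≤ R - ⨆ a', A a' - h a' :=
    ciSup_le fun a => by linarith [inner a]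
  linarith

end Suprema

section Contraction

variable {α : Type*} [Nonempty α] {n : ℕ}

lemma expSign_iSup_le_of_eq_of_ne (u v : α → Fin n → ℝ) (k : Fin n)
    (huv : ∀ a i, i ≠ k → u a i = v a i) (hk : ∀ a a', |u a k - u a' k| ≤ |v a k - v a' k|)
    (hv : ∀ s : Fin n → ℝ, BddAbove (range fun a => ∑ i, s i * v a i)) :
    expSign n (fun s => ⨆ a, ∑ i, s i * u a i) ≤ expSign n (fun s => ⨆ a, ∑ i, s i * v a i) := by
  refine expSign_le_of_add_comp_flip_le k fun (s : Fin n → ℝ) hs => ?_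
  set A : α → ℝ := fun a => ∑ i ∈ univ.erase k, s i * u a i
  have hsplit : ∀ (r : Fin n → ℝ) (x : α → Fin n → ℝ), (∀ i, i ≠ k → r i = s i) →
      (∀ a i, i ≠ k → x a i = u a i) → ∀ a, ∑ i, r i * x a i = A a + r k * x a k := by
    intro r x hr hx a
    rw [← add_sum_erase _ _ (mem_univ k), add_comm]
    congr 1
    exact sum_congr rfl fun i hi => by rw [hr i (ne_of_mem_erase hi), hx a i (ne_of_mem_erase hi)]
  have hs' : ∀ i, i ≠ k → (if i = k then -s i else s i) = s i := fun i hi => if_neg hi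
  have hv' : ∀ a i, i ≠ k → v a i = u a i := fun a i hi => (huv a i hi).symm
  simp only [hsplit s u (fun _ _ => rfl) (fun _ _ _ => rfl), hsplit s v (fun _ _ => rfl) hv',
    hsplit _ u hs' (fun _ _ _ => rfl), hsplit _ v hs' hv', if_pos, neg_mul, ← sub_eq_add_neg]
  refine ciSup_add_ciSup_le_of_abs_sub_le (fun a a' => ?_) ?_ ?_
  · rw [← mul_sub, ← mul_sub, abs_mul, abs_mul, hs k]
    simpa using hk a a'
  · simpa only [hsplit s v (fun _ _ => rfl) hv'] using hv s
  · simpa only [hsplit _ v hs' hv', if_pos, neg_mul, ← sub_eq_add_neg] using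
      hv fun i => if i = k then -s i else s i

theorem expSign_iSup_le_of_abs_sub_le (u v : α → Fin n → ℝ)
    (huv : ∀ a a' i, |u a i - u a' i| ≤ |v a i - v a' i|)
    (hu : ∀ i, ∃ M, ∀ a, |u a i| ≤ M) (hv : ∀ i, ∃ M, ∀ a, |v a i| ≤ M) :
    expSign n (fun s => ⨆ a, ∑ i, s i * u a i) ≤ expSign n (fun s => ⨆ a, ∑ i, s i * v a i) := by
  classical
  let mix (S : Finset (Fin n)) (a : α) (i : Fin n) : ℝ := if i ∈ S then v a i else u a i
  have hmix : ∀ S, expSign n (fun s => ⨆ a, ∑ i, s i * u a i)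
      ≤ expSign n (fun s => ⨆ a, ∑ i, s i * mix S a i) := by
    intro S
    induction S using Finset.induction_on with
    | empty => simp [mix]
    | insert k S hk ih =>
      refine ih.trans (expSign_iSup_le_of_eq_of_ne _ _ k (fun a i hi => by simp [mix, hi])
        (fun a a' => by simpa [mix, hk] using huv a a' k) (bddAbove_range_sum_mul fun i => ?_))
      obtain ⟨Mu, hMu⟩ := hu i
      obtain ⟨Mv, hMv⟩ := hv i
      refine ⟨max Mu Mv, fun a => ?_⟩
      dsimp only [mix]
      split_ifs
      exacts [(hMv a).trans (le_max_right _ _), (hMu a).trans (le_max_left _ _)]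
  simpa [mix] using hmix univ

theorem expSign_iSup_comp_le (t : α → Fin n → ℝ) (ψ : Fin n → ℝ → ℝ) {K : ℝ≥0}
    (hψ : ∀ i, LipschitzWith K (ψ i)) (ht : ∀ i, ∃ M, ∀ a, |t a i| ≤ M) :
    expSign n (fun s => ⨆ a, ∑ i, s i * ψ i (t a i))
      ≤ K * expSign n (fun s => ⨆ a, ∑ i, s i * t a i) := by
  calc expSign n (fun s => ⨆ a, ∑ i, s i * ψ i (t a i))
      ≤ expSign n (fun s => ⨆ a, ∑ i, s i * (K * t a i)) := by
        refine expSign_iSup_le_of_abs_sub_le _ _ (fun a a' i => ?_)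
          (fun i => (hψ i).exists_abs_comp_le (ht i)) (fun i => ?_)
        · rw [← mul_sub, abs_mul, NNReal.abs_eq, ← Real.dist_eq, ← Real.dist_eq]
          exact (hψ i).dist_le_mul _ _
        · obtain ⟨M, hM⟩ := ht i
          refine ⟨K * M, fun a => ?_⟩
          rw [abs_mul, NNReal.abs_eq]
          exact mul_le_mul_of_nonneg_left (hM a) K.coe_nonneg
    _ = K * expSign n (fun s => ⨆ a, ∑ i, s i * t a i) := by
        rw [← expSign_const_mul]
        congr 1
        funext s
        rw [Real.mul_iSup_of_nonneg K.coe_nonneg]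
        simp only [mul_sum, mul_left_comm]

end Contraction

/-- Removing the absolute value costs a factor `2` for the symmetric part and `|φ 0| √n` for the
constant offset. -/
theorem expSign_iSup_abs_comp_le {α : Type*} {n : ℕ} (t : α → Fin n → ℝ)
    (ht : ∀ i, ∃ M, ∀ a, |t a i| ≤ M) {a₀ : α} (ht₀ : ∀ i, t a₀ i = 0) {φ : ℝ → ℝ} {K : ℝ≥0}
    (hφ : LipschitzWith K φ) :
    expSign n (fun s => ⨆ a, |∑ i, s i * φ (t a i)|)
      ≤ 2 * K * expSign n (fun s => ⨆ a, ∑ i, s i * t a i) + |φ 0| * √n := by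
  have : Nonempty α := ⟨a₀⟩
  let X : (Fin n → ℝ) → α → ℝ := fun s a => ∑ i, s i * φ (t a i)
  have hX : ∀ s, BddAbove (range (X s)) :=
    bddAbove_range_sum_mul fun i => hφ.exists_abs_comp_le (ht i)
  have hXneg : ∀ s, X (-s) = fun a => -X s a := fun s => funext fun a => by
    simp [X, sum_neg_distrib]
  have hX₀ : ∀ s, X s a₀ = φ 0 * ∑ i, s i := fun s => by simp [X, ht₀, sum_mul, mul_comm]
  have hsymm : expSign n (fun s => ⨆ a, X (-s) a) = expSign n (fun s => ⨆ a, X s a) := by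
    simpa only [if_true, ← Pi.neg_def] using
      expSign_comp_neg_ite (fun _ => True) fun s => ⨆ a, X s a
  calc expSign n (fun s => ⨆ a, |X s a|)
      ≤ expSign n (fun s => (⨆ a, X s a) + (⨆ a, X (-s) a) + |φ 0| * |∑ i, s i|) := by
        refine expSign_mono fun s _ => ciSup_le fun a => ?_
        have := abs_le_ciSup_add_ciSup_neg_add_abs (hX s) (hXneg s ▸ hX (-s)) a a₀
        rwa [hX₀, abs_mul, ← hXneg] at this
    _ = 2 * expSign n (fun s => ⨆ a, X s a) + |φ 0| * expSign n (fun s => |∑ i, s i|) := by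
        rw [expSign_add, expSign_add, expSign_const_mul, hsymm]
        ring
    _ ≤ 2 * (K * expSign n (fun s => ⨆ a, ∑ i, s i * t a i)) + |φ 0| * √n := by
        gcongr
        exacts [expSign_iSup_comp_le t (fun _ => φ) (fun _ => hφ) ht, expSign_abs_sum_le_sqrt]
    _ = _ := by ring

/-- The paper's inequality `∑ⱼ αⱼ βⱼ ≤ (∑ⱼ |αⱼ|) maxₖ |βₖ|`, with `αₘ = f m` and `βₘ` the
Rademacher sum built on the `m`-th row of `W`. -/
lemma sum_mul_sum_mul_comp_mulVec_le {p d N : ℕ} (W : Matrix (Fin p) (Fin d) ℝ) (f : Fin p → ℝ)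
    (φ : ℝ → ℝ) (z : Fin N → Fin d → ℝ) (s : Fin N → ℝ) {K : ℝ}
    (hK : ∀ m, |∑ i, s i * φ (∑ q, W m q * z i q)| ≤ K) :
    ∑ i, s i * ∑ m, f m * φ (W.mulVec (z i) m) ≤ (∑ m, |f m|) * K := by
  calc ∑ i, s i * ∑ m, f m * φ (W.mulVec (z i) m)
      = ∑ m, f m * ∑ i, s i * φ (∑ q, W m q * z i q) := by
        simp only [mul_sum]
        rw [sum_comm]
        exact sum_congr rfl fun m _ => sum_congr rfl fun i _ => by
          simp only [Matrix.mulVec, dotProduct]; ring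
    _ ≤ (∑ m, |f m|) * K := sum_mul_le_sum_abs_mul _ fun m _ => hK m

lemma csSup_image_le_mul_iSup_abs {p d N : ℕ} {C : Set (Matrix (Fin p) (Fin d) ℝ)}
    (hC : C.Nonempty) {f : Matrix (Fin p) (Fin d) ℝ → Fin p → ℝ} {B : ℝ}
    (hB : ∀ W ∈ C, ∑ m, |f W m| ≤ B) {R : Set (Fin d → ℝ)} (hR : ∀ W ∈ C, ∀ m, W m ∈ R)
    (φ : ℝ → ℝ) (z : Fin N → Fin d → ℝ) (s : Fin N → ℝ)
    (hbdd : BddAbove (range fun w : R => |∑ i, s i * φ (∑ q, (w : Fin d → ℝ) q * z i q)|)) :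
    sSup ((fun W => (1 / (N : ℝ)) * ∑ i, s i * ∑ m, f W m * φ (W.mulVec (z i) m)) '' C)
      ≤ B / N * ⨆ w : R, |∑ i, s i * φ (∑ q, (w : Fin d → ℝ) q * z i q)| := by
  refine csSup_le (hC.image _) ?_
  rintro _ ⟨W, hW, rfl⟩
  have hK₀ := Real.iSup_nonneg fun w : R => abs_nonneg (∑ i, s i * φ (∑ q, w.1 q * z i q))
  calc (1 / (N : ℝ)) * ∑ i, s i * ∑ m, f W m * φ (W.mulVec (z i) m)
      ≤ 1 / N * ((∑ m, |f W m|) * ⨆ w : R, |∑ i, s i * φ (∑ q, w.1 q * z i q)|) := by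
        gcongr
        exact sum_mul_sum_mul_comp_mulVec_le W (f W) φ z s fun m =>
          le_ciSup hbdd ⟨W m, hR W hW m⟩
    _ ≤ 1 / N * (B * ⨆ w : R, |∑ i, s i * φ (∑ q, w.1 q * z i q)|) := by
        gcongr
        exact hB W hW
    _ = _ := by ring

theorem stmt3_general {p d N : ℕ}
    (φ : ℝ → ℝ) (Lφ c : ℝ) (hL : 0 ≤ Lφ)
    (hLip : ∀ x y, |φ x - φ y| ≤ Lφ * |x - y|) (hc : φ 0 = c)
    (C : Set (Matrix (Fin p) (Fin d) ℝ)) (hC : C.Nonempty)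
    (f : Matrix (Fin p) (Fin d) ℝ → Fin p → ℝ) (B : ℝ)
    (hB : ∀ W ∈ C, ∑ m, |f W m| ≤ B)
    (z : Fin N → Fin d → ℝ) (RS : Set (Fin d → ℝ))
    (hRS : RS = insert 0 {w | ∃ W ∈ C, ∃ j, W j = w})
    (hbdd2 : ∀ s : Fin N → ℝ,
      BddAbove ((fun w => ∑ i, s i * ∑ q, w q * z i q) '' RS)) :
    expSign N (fun s =>
        sSup ((fun W => (1 / (N : ℝ)) * ∑ i, s i * ∑ m, f W m * φ (W.mulVec (z i) m)) '' C))
      ≤ (2 * B * Lφ / N) *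
          expSign N (fun s => sSup ((fun w => ∑ i, s i * ∑ q, w q * z i q) '' RS))
        + B * |c| / Real.sqrt N := by
  have hB₀ : 0 ≤ B :=
    let ⟨W, hW⟩ := hC; (sum_nonneg fun m _ => abs_nonneg _).trans (hB W hW)
  have h0 : (0 : Fin d → ℝ) ∈ RS := hRS ▸ Set.mem_insert _ _
  have hrow : ∀ W ∈ C, ∀ m, W m ∈ RS := fun W hW m => hRS ▸ Or.inr ⟨W, hW, m, rfl⟩
  have hφ : LipschitzWith ⟨Lφ, hL⟩ φ :=
    LipschitzWith.of_dist_le_mul fun x y => by rw [Real.dist_eq, Real.dist_eq]; exact hLip x y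
  let t : RS → Fin N → ℝ := fun w i => ∑ q, (w : Fin d → ℝ) q * z i q
  have ht := exists_abs_le_of_bddAbove_range_sum_mul (u := t) fun s => by
    simpa only [Set.image_eq_range] using hbdd2 s
  have hT : (fun s : Fin N → ℝ => sSup ((fun w => ∑ i, s i * ∑ q, w q * z i q) '' RS))
      = fun s => ⨆ w, ∑ i, s i * t w i := funext fun s => by rw [Set.image_eq_range]; rfl
  rw [hT]
  calc _ ≤ expSign N (fun s => B / N * ⨆ w, |∑ i, s i * φ (t w i)|) :=
        expSign_mono fun s _ => csSup_image_le_mul_iSup_abs hC hB hrow φ z s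
          (bddAbove_range_abs_sum_mul (fun i => hφ.exists_abs_comp_le (ht i)) s)
    _ = B / N * expSign N (fun s => ⨆ w, |∑ i, s i * φ (t w i)|) := expSign_const_mul _ _
    _ ≤ B / N * (2 * Lφ * expSign N (fun s => ⨆ w, ∑ i, s i * t w i) + |c| * √N) := by
        gcongr
        have := expSign_iSup_abs_comp_le t ht (a₀ := ⟨0, h0⟩) (fun i => by simp [t]) hφ
        rw [hc] at this
        exact this
    _ = _ := by
        rw [div_eq_mul_one_div (B * |c|), ← Real.sqrt_div_self']
        ring

theorem stmt3 {p d N : ℕ}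
    (φ : ℝ → ℝ) (Lφ c : ℝ) (hL : 0 ≤ Lφ)
    (hLip : ∀ x y, |φ x - φ y| ≤ Lφ * |x - y|) (hc : φ 0 = c)
    (C : Set (Matrix (Fin p) (Fin d) ℝ)) (hC : C.Nonempty)
    (f : Matrix (Fin p) (Fin d) ℝ → Fin p → ℝ) (B : ℝ)
    (hB : ∀ W ∈ C, ∑ m, |f W m| ≤ B)
    (z : Fin N → Fin d → ℝ) (RS : Set (Fin d → ℝ))
    (hRS : RS = insert 0 {w | ∃ W ∈ C, ∃ j, W j = w})
    (hbdd1 : ∀ s : Fin N → ℝ,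
      BddAbove ((fun W => (1 / (N : ℝ)) * ∑ i, s i * ∑ m, f W m * φ (W.mulVec (z i) m)) '' C))
    (hbdd2 : ∀ s : Fin N → ℝ,
      BddAbove ((fun w => ∑ i, s i * ∑ q, w q * z i q) '' RS)) :
    expSign N (fun s =>
        sSup ((fun W => (1 / (N : ℝ)) * ∑ i, s i * ∑ m, f W m * φ (W.mulVec (z i) m)) '' C))
      ≤ (2 * B * Lφ / N) *
          expSign N (fun s => sSup ((fun w => ∑ i, s i * ∑ q, w q * z i q) '' RS))
        + B * |c| / Real.sqrt N :=
  stmt3_general φ Lφ c hL hLip hc C hC f B hB z RS hRS hbdd2
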